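/- arXiv:2412.03423 — 9 statements merged into one kernel-verified Lean document; each statement's English description precedes it below -/
import Mathlib

section
/- Let G ⊆ ℝ^d be a convex set, F : ℝ^d → ℝ^d a flux function, and λmax : ℝ^d × ℝ^d → ℝ a wave-speed estimate satisfying the generalized Lax–Friedrichs splitting property: for all U_L, U_R ∈ G and all λ ≥ λmax(U_L, U_R) with λ > 0, one has (U_L + U_R)/2 − (F(U_R) − F(U_L))/(2λ) ∈ G. Suppose Ū, U_L, U_M, U_R ∈ ℝ^d satisfy the cell average decomposition Ū = (1/6)U_L + (4/6)U_M + (1/6)U_R, with U_L, U_M, U_R ∈ G. Then for any Δt > 0 and Δx > 0 with λmax(U_L, U_R)·Δt/Δx ≤ 1/6 and λmax(U_L, U_R) > 0, the updated value Ū − (Δt/Δx)·(F(U_R) − F(U_L)) belongs to G. -/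
/-- **IDP property of the PAMPA cell-average update (Theorem 4.1).**
If the generalized Lax–Friedrichs splitting property holds for a convex
invariant domain `G`, the cell average decomposition
`Ū = (1/6)U_L + (4/6)U_M + (1/6)U_R` holds, and the three point values lie
in `G`, then under the CFL condition `λmax(U_L,U_R)·Δt/Δx ≤ 1/6` the updated
cell average `Ū − (Δt/Δx)(F(U_R) − F(U_L))` lies in `G`. -/
theorem idp_cell_average_update_of_CAD
    (d : ℕ) (G : Set (Fin d → ℝ)) (hG : Convex ℝ G)
    (F : (Fin d → ℝ) → (Fin d → ℝ))
    (lmax : (Fin d → ℝ) → (Fin d → ℝ) → ℝ)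
    (hLF : ∀ UL UR : Fin d → ℝ, UL ∈ G → UR ∈ G →
      ∀ lam : ℝ, lam ≥ lmax UL UR → 0 < lam →
        (1 / 2 : ℝ) • (UL + UR) - (1 / (2 * lam)) • (F UR - F UL) ∈ G)
    (Ubar UL UM UR : Fin d → ℝ)
    (hCAD : Ubar = (1 / 6 : ℝ) • UL + (4 / 6 : ℝ) • UM + (1 / 6 : ℝ) • UR)
    (hUL : UL ∈ G) (hUM : UM ∈ G) (hUR : UR ∈ G)
    (Δt Δx : ℝ) (hΔt : 0 < Δt) (hΔx : 0 < Δx)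
    (hCFL : lmax UL UR * Δt / Δx ≤ 1 / 6) (hpos : 0 < lmax UL UR) :
    Ubar - (Δt / Δx) • (F UR - F UL) ∈ G := by
  set μ : ℝ := Δt / Δx with hμ
  have hμpos : 0 < μ := div_pos hΔt hΔx
  set lam : ℝ := 1 / (6 * μ) with hlam
  have hlampos : 0 < lam := by positivity
  have hge : lam ≥ lmax UL UR := by
    rw [hlam, ge_iff_le, le_div_iff₀ (by positivity)]
    have : lmax UL UR * Δt / Δx = lmax UL UR * μ := by
      rw [hμ]; ring
    nlinarith [hCFL, this]
  have hV := hLF UL UR hUL hUR lam hge hlampos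
  have hmem := hG hV hUM (by norm_num : (0:ℝ) ≤ 1/3)
    (by norm_num : (0:ℝ) ≤ 2/3) (by norm_num)
  convert hmem using 1
  have h2lam : 1 / (2 * lam) = 3 * μ := by
    rw [hlam]; field_simp; ring
  rw [hCAD, h2lam]
  have hμne : μ ≠ 0 := ne_of_gt hμpos
  module
end

section
/- Let G ⊆ ℝ^d be a convex set, F : ℝ^d → ℝ^d a flux function, and λmax : ℝ^d × ℝ^d → ℝ a wave-speed estimate satisfying the generalized Lax–Friedrichs splitting property: for all U_L, U_R ∈ G and all λ ≥ λmax(U_L, U_R) with λ > 0, one has (U_L + U_R)/2 − (F(U_R) − F(U_L))/(2λ) ∈ G. Suppose Ū ∈ G, U_L, U_R ∈ G, and the midpoint value (3/2)Ū − (1/4)(U_L + U_R) ∈ G. Then for any Δt > 0 and Δx > 0 with λmax(U_L, U_R)·Δt/Δx ≤ 1/6 and λmax(U_L, U_R) > 0, the updated value Ū − (Δt/Δx)·(F(U_R) − F(U_L)) belongs to G. -/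
/-- **IDP property of the PAMPA cell-average update, midpoint-value form (Theorem 4.2).**
If the generalized Lax–Friedrichs splitting property holds for a convex invariant
domain `G`, the cell average `Ū` and the endpoint values `U_L, U_R` lie in `G`, and
the midpoint value `(3/2)Ū − (1/4)(U_L + U_R)` lies in `G`, then under the CFL
condition `λmax(U_L,U_R)·Δt/Δx ≤ 1/6` the updated cell average
`Ū − (Δt/Δx)(F(U_R) − F(U_L))` lies in `G`. -/
theorem idp_cell_average_update_of_midpoint
    (d : ℕ) (G : Set (Fin d → ℝ)) (hG : Convex ℝ G)
    (F : (Fin d → ℝ) → (Fin d → ℝ))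
    (lmax : (Fin d → ℝ) → (Fin d → ℝ) → ℝ)
    (hLF : ∀ UL UR : Fin d → ℝ, UL ∈ G → UR ∈ G →
      ∀ lam : ℝ, lam ≥ lmax UL UR → 0 < lam →
        (1 / 2 : ℝ) • (UL + UR) - (1 / (2 * lam)) • (F UR - F UL) ∈ G)
    (Ubar UL UR : Fin d → ℝ)
    (hUbar : Ubar ∈ G) (hUL : UL ∈ G) (hUR : UR ∈ G)
    (hmid : (3 / 2 : ℝ) • Ubar - (1 / 4 : ℝ) • (UL + UR) ∈ G)
    (Δt Δx : ℝ) (hΔt : 0 < Δt) (hΔx : 0 < Δx)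
    (hCFL : lmax UL UR * Δt / Δx ≤ 1 / 6) (hpos : 0 < lmax UL UR) :
    Ubar - (Δt / Δx) • (F UR - F UL) ∈ G := by
  set lam : ℝ := Δx / (6 * Δt) with hlam
  have hlampos : 0 < lam := by positivity
  have hge : lam ≥ lmax UL UR := by
    rw [hlam, ge_iff_le, le_div_iff₀ (by positivity)]
    have := (div_le_iff₀ hΔx).mp hCFL
    nlinarith
  have hW := hLF UL UR hUL hUR lam hge hlampos
  have hcoef : (1 : ℝ) / (2 * lam) = 3 * (Δt / Δx) := by
    rw [hlam]; field_simp; ring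
  rw [hcoef] at hW
  have := hG hmid hW (by norm_num : (0:ℝ) ≤ 2/3) (by norm_num : (0:ℝ) ≤ 1/3) (by norm_num)
  convert this using 1
  module
end

section
/- For the 1D advection equation u_t + u_x = 0 (flux f(u) = u) with invariant domain G = [0,1], the following holds: for every r > 0 there exist values ū, u_L, u_R ∈ [0,1] such that the midpoint value (3/2)ū − (1/4)(u_L + u_R) does not lie in [0,1], and the updated cell average ū − r·(f(u_R) − f(u_L)) does not lie in [0,1]. (In particular, no fixed CFL ratio r = Δt/Δx > 0 can guarantee that the updated cell average stays in G when the midpoint value lies outside G, even though ū, u_L, u_R ∈ G.) -/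
/-- **No fixed CFL number guarantees IDP cell averages with only continuous flux
(Theorem 4.3).** For the advection equation `u_t + u_x = 0` (flux `f(u) = u`) with
invariant domain `G = [0,1]`: for every CFL ratio `r > 0` there are data
`ū, u_L, u_R ∈ [0,1]` whose midpoint value `(3/2)ū − (1/4)(u_L + u_R)` lies outside
`[0,1]` and whose updated cell average `ū − r(f(u_R) − f(u_L))` lies outside `[0,1]`. -/
theorem no_constant_CFL_for_continuous_flux :
    ∀ r : ℝ, 0 < r →
      ∃ ubar uL uR : ℝ,
        ubar ∈ Set.Icc (0 : ℝ) 1 ∧ uL ∈ Set.Icc (0 : ℝ) 1 ∧ uR ∈ Set.Icc (0 : ℝ) 1 ∧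
        (3 / 2) * ubar - (1 / 4) * (uL + uR) ∉ Set.Icc (0 : ℝ) 1 ∧
        ubar - r * ((fun u : ℝ => u) uR - (fun u : ℝ => u) uL) ∉ Set.Icc (0 : ℝ) 1 := by
  intro r hr
  refine ⟨1, 1, 0, by norm_num, by norm_num, by norm_num, by norm_num, ?_⟩
  simp only [Set.mem_Icc, not_and_or, not_le]
  right; nlinarith
end

section
/- Let G ⊆ ℝ^d be a convex set, μ₀ > 0, and let F̂ : ℝ^d × ℝ^d → ℝ^d be a numerical flux that is invariant-domain-preserving in the following sense: for all V₁, V₂, V₃ ∈ G and all μ ∈ [0, μ₀], one has V₂ − μ·(F̂(V₂, V₃) − F̂(V₁, V₂)) ∈ G. Suppose the five point values Û_L^{out}, Û_L^{in}, Û_M, Û_R^{in}, Û_R^{out} all belong to G (here Û_L^{in}, Û_M, Û_R^{in} are the left-endpoint, midpoint, and right-endpoint values of the cell, and Û_L^{out}, Û_R^{out} are the values on the outer sides of the two interfaces), and that the cell average decomposition Ū = (1/6)Û_L^{in} + (4/6)Û_M + (1/6)Û_R^{in} holds. Then for any Δt > 0 and Δx > 0 with 6·Δt/Δx ≤ μ₀,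 the updated cell average Ū − (Δt/Δx)·(F̂(Û_R^{in}, Û_R^{out}) − F̂(Û_L^{out}, Û_L^{in})) belongs to G. -/
/-- **Provably IDP modified PAMPA scheme for cell averages (Theorem 5.1).**
If `F̂` is an IDP numerical flux for the convex set `G` with CFL bound `μ₀`
(the three-point first-order scheme stays in `G` for all `0 ≤ μ ≤ μ₀`), all five
point values lie in `G`, and the cell average decomposition
`Ū = (1/6)Û_L^in + (4/6)Û_M + (1/6)Û_R^in` holds, then under the CFL condition
`6Δt/Δx ≤ μ₀` the updated cell average lies in `G`. -/
theorem idp_modified_pampa_cell_average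
    (d : ℕ) (G : Set (Fin d → ℝ)) (hG : Convex ℝ G)
    (μ₀ : ℝ) (hμ₀ : 0 < μ₀)
    (Fhat : (Fin d → ℝ) → (Fin d → ℝ) → (Fin d → ℝ))
    (hIDP : ∀ V₁ V₂ V₃ : Fin d → ℝ, V₁ ∈ G → V₂ ∈ G → V₃ ∈ G →
      ∀ μ : ℝ, 0 ≤ μ → μ ≤ μ₀ → V₂ - μ • (Fhat V₂ V₃ - Fhat V₁ V₂) ∈ G)
    (ULout ULin UM URin URout Ubar : Fin d → ℝ)
    (hULout : ULout ∈ G) (hULin : ULin ∈ G) (hUM : UM ∈ G)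
    (hURin : URin ∈ G) (hURout : URout ∈ G)
    (hCAD : Ubar = (1 / 6 : ℝ) • ULin + (4 / 6 : ℝ) • UM + (1 / 6 : ℝ) • URin)
    (Δt Δx : ℝ) (hΔt : 0 < Δt) (hΔx : 0 < Δx)
    (hCFL : 6 * Δt / Δx ≤ μ₀) :
    Ubar - (Δt / Δx) • (Fhat URin URout - Fhat ULout ULin) ∈ G := by
  set lam : ℝ := Δt / Δx with hlam
  have hlam0 : 0 ≤ lam := le_of_lt (div_pos hΔt hΔx)
  have h6 : 6 * lam ≤ μ₀ := by
    rw [hlam, ← mul_div_assoc]; exact hCFL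
  have h32 : (3 / 2 : ℝ) * lam ≤ μ₀ := by nlinarith
  have hU1 : ULin - (6 * lam) • (Fhat ULin UM - Fhat ULout ULin) ∈ G :=
    hIDP ULout ULin UM hULout hULin hUM _ (by linarith) h6
  have hU2 : UM - ((3 / 2 : ℝ) * lam) • (Fhat UM URin - Fhat ULin UM) ∈ G :=
    hIDP ULin UM URin hULin hUM hURin _ (by linarith) h32
  have hU3 : URin - (6 * lam) • (Fhat URin URout - Fhat UM URin) ∈ G :=
    hIDP UM URin URout hUM hURin hURout _ (by linarith) h6
  have key : Ubar - lam • (Fhat URin URout - Fhat ULout ULin) =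
      (1 / 6 : ℝ) • (ULin - (6 * lam) • (Fhat ULin UM - Fhat ULout ULin)) +
      (4 / 6 : ℝ) • (UM - ((3 / 2 : ℝ) * lam) • (Fhat UM URin - Fhat ULin UM)) +
      (1 / 6 : ℝ) • (URin - (6 * lam) • (Fhat URin URout - Fhat UM URin)) := by
    rw [hCAD]; module
  rw [key]
  set U1 := ULin - (6 * lam) • (Fhat ULin UM - Fhat ULout ULin)
  set U2 := UM - ((3 / 2 : ℝ) * lam) • (Fhat UM URin - Fhat ULin UM)
  set U3 := URin - (6 * lam) • (Fhat URin URout - Fhat UM URin)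
  have hmid : (1 / 5 : ℝ) • U1 + (4 / 5 : ℝ) • U2 ∈ G :=
    hG hU1 hU2 (by norm_num) (by norm_num) (by norm_num)
  have hfin : (5 / 6 : ℝ) • ((1 / 5 : ℝ) • U1 + (4 / 5 : ℝ) • U2) + (1 / 6 : ℝ) • U3 ∈ G :=
    hG hmid hU3 (by norm_num) (by norm_num) (by norm_num)
  have : (5 / 6 : ℝ) • ((1 / 5 : ℝ) • U1 + (4 / 5 : ℝ) • U2) + (1 / 6 : ℝ) • U3 =
      (1 / 6 : ℝ) • U1 + (4 / 6 : ℝ) • U2 + (1 / 6 : ℝ) • U3 := by module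
  rwa [this] at hfin
end

section
/- Let f : ℝ → ℝ be differentiable and convex (or concave), and let u_L, u_R ∈ ℝ. For every λ > 0 with λ ≥ max{|f′(u_L)|, |f′(u_R)|}, the value (u_L + u_R)/2 − (f(u_R) − f(u_L))/(2λ) lies in the interval [min(u_L, u_R), max(u_L, u_R)]. In particular, if u_L, u_R ∈ [U_min, U_max], then this value lies in [U_min, U_max]. -/
private lemma lip_convex (f : ℝ → ℝ) (hf : Differentiable ℝ f)
    (hc : ConvexOn ℝ Set.univ f) (a b : ℝ) :
    |f b - f a| ≤ max |deriv f a| |deriv f b| * |b - a| := by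
  rcases lt_trichotomy a b with h | rfl | h
  · have h1 := hc.deriv_le_slope (Set.mem_univ a) (Set.mem_univ b) h (hf a)
    have h2 := hc.slope_le_deriv (Set.mem_univ a) (Set.mem_univ b) h (hf b)
    rw [slope_def_field] at h1 h2
    have hba : (0:ℝ) < b - a := by linarith
    have hs : |(f b - f a) / (b - a)| ≤ max |deriv f a| |deriv f b| := by
      rw [abs_le]
      refine ⟨le_trans (by simp) (le_trans (neg_abs_le _) h1),
        le_trans h2 (le_trans (le_abs_self _) (le_max_right _ _))⟩
    calc |f b - f a| = |(f b - f a) / (b - a)| * |b - a| := by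
          rw [abs_div]; field_simp
      _ ≤ max |deriv f a| |deriv f b| * |b - a| :=
          mul_le_mul_of_nonneg_right hs (abs_nonneg _)
  · simp [mul_nonneg (le_trans (abs_nonneg (deriv f a)) (le_max_left _ _)) (abs_nonneg (0:ℝ))]
  · have h1 := hc.deriv_le_slope (Set.mem_univ b) (Set.mem_univ a) h (hf b)
    have h2 := hc.slope_le_deriv (Set.mem_univ b) (Set.mem_univ a) h (hf a)
    rw [slope_def_field] at h1 h2
    have hab : (0:ℝ) < a - b := by linarith
    have hs : |(f a - f b) / (a - b)| ≤ max |deriv f a| |deriv f b| := by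
      rw [abs_le]
      refine ⟨le_trans (by simp) (le_trans (neg_abs_le _) h1),
        le_trans h2 (le_trans (le_abs_self _) (le_max_left _ _))⟩
    calc |f b - f a| = |(f a - f b) / (a - b)| * |b - a| := by
          rw [abs_div, abs_sub_comm (f a), abs_sub_comm a,
            div_mul_cancel₀ _ (abs_ne_zero.mpr (sub_ne_zero.mpr (ne_of_lt h) : b - a ≠ 0))]
      _ ≤ max |deriv f a| |deriv f b| * |b - a| :=
          mul_le_mul_of_nonneg_right hs (abs_nonneg _)

private lemma lip_both (f : ℝ → ℝ) (hf : Differentiable ℝ f)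
    (hcc : ConvexOn ℝ Set.univ f ∨ ConcaveOn ℝ Set.univ f) (a b : ℝ) :
    |f b - f a| ≤ max |deriv f a| |deriv f b| * |b - a| := by
  rcases hcc with hc | hc
  · exact lip_convex f hf hc a b
  · have := lip_convex (fun x => -f x) hf.neg hc.neg a b
    have he : |-f b + f a| = |f b - f a| := by rw [← abs_neg]; ring_nf
    simpa [deriv.neg, he] using this

/-- **Generalized Lax–Friedrichs splitting property for scalar conservation laws
with convex or concave flux.** If `f` is differentiable and convex (or concave)
and `λ ≥ max{|f′(u_L)|, |f′(u_R)|}` with `λ > 0`, then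
`(u_L + u_R)/2 − (f(u_R) − f(u_L))/(2λ)` lies in `[min(u_L,u_R), max(u_L,u_R)]`;
in particular, it lies in any interval `[U_min, U_max]` containing `u_L` and `u_R`. -/
theorem lax_friedrichs_splitting_scalar_convex_flux
    (f : ℝ → ℝ) (hf : Differentiable ℝ f)
    (hcc : ConvexOn ℝ Set.univ f ∨ ConcaveOn ℝ Set.univ f)
    (uL uR lam : ℝ) (hlam : 0 < lam)
    (hge : lam ≥ max |deriv f uL| |deriv f uR|) :
    (uL + uR) / 2 - (f uR - f uL) / (2 * lam) ∈ Set.Icc (min uL uR) (max uL uR) ∧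
    ∀ Umin Umax : ℝ, uL ∈ Set.Icc Umin Umax → uR ∈ Set.Icc Umin Umax →
      (uL + uR) / 2 - (f uR - f uL) / (2 * lam) ∈ Set.Icc Umin Umax := by
  have key : |f uR - f uL| ≤ lam * |uR - uL| := by
    calc |f uR - f uL| ≤ max |deriv f uL| |deriv f uR| * |uR - uL| :=
          lip_both f hf hcc uL uR
      _ ≤ lam * |uR - uL| := mul_le_mul_of_nonneg_right hge (abs_nonneg _)
  have habs := abs_le.mp key
  have h2 : (0:ℝ) < 2 * lam := by linarith
  have hq : |(f uR - f uL) / (2 * lam)| ≤ |uR - uL| / 2 := by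
    rw [abs_div, abs_of_pos h2, div_le_div_iff₀ h2 (by norm_num)]
    nlinarith [abs_le.mp key]
  have hq' := abs_le.mp hq
  have hmem : (uL + uR) / 2 - (f uR - f uL) / (2 * lam) ∈
      Set.Icc (min uL uR) (max uL uR) := by
    rcases abs_cases (uR - uL) with ⟨he, _⟩ | ⟨he, _⟩ <;> rw [he] at hq' <;>
      constructor <;>
      [skip; skip; skip; skip] <;>
      · rcases min_cases uL uR with ⟨hm, _⟩ | ⟨hm, _⟩ <;>
        rcases max_cases uL uR with ⟨hM, _⟩ | ⟨hM, _⟩ <;>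
        simp only [hm, hM] <;> cases hq' <;> first
          | (simp only [Set.mem_Icc]; constructor <;> linarith)
          | linarith
  refine ⟨hmem, fun Umin Umax hL hR => ?_⟩
  exact ⟨le_trans (le_min hL.1 hR.1) hmem.1, le_trans hmem.2 (max_le hL.2 hR.2)⟩
end

section
/- Let γ > 1. For the 1D compressible Euler equations with conservative state U = (ρ, m, E), pressure p(U) = (γ−1)(E − m²/(2ρ)), sound speed c(U) = √(γ p(U)/ρ), and flux F(U) = (m, m²/ρ + p(U), (m/ρ)(E + p(U))), the following holds: if U_L and U_R both belong to the invariant domain G = {(ρ, m, E) : ρ > 0, p(U) > 0}, and λ ≥ max{|m_L/ρ_L| + c(U_L), |m_R/ρ_R| + c(U_R)}, then (U_L + U_R)/2 − (F(U_R) − F(U_L))/(2λ) ∈ G. -/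
/-- Pressure of a 1D Euler state `U = (ρ, m, E)`: `p = (γ−1)(E − m²/(2ρ))`. -/
noncomputable def eulerPressure (γ : ℝ) (U : ℝ × ℝ × ℝ) : ℝ :=
  (γ - 1) * (U.2.2 - U.2.1 ^ 2 / (2 * U.1))

/-- Sound speed of a 1D Euler state: `c = √(γp/ρ)`. -/
noncomputable def eulerSoundSpeed (γ : ℝ) (U : ℝ × ℝ × ℝ) : ℝ :=
  Real.sqrt (γ * eulerPressure γ U / U.1)

/-- Flux of the 1D compressible Euler equations:
`F(U) = (m, m²/ρ + p, (m/ρ)(E + p))`. -/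
noncomputable def eulerFlux (γ : ℝ) (U : ℝ × ℝ × ℝ) : ℝ × ℝ × ℝ :=
  (U.2.1, U.2.1 ^ 2 / U.1 + eulerPressure γ U,
    (U.2.1 / U.1) * (U.2.2 + eulerPressure γ U))

/-- Invariant domain of the Euler equations: positive density and pressure. -/
noncomputable def eulerInvariantDomain (γ : ℝ) : Set (ℝ × ℝ × ℝ) :=
  {U | 0 < U.1 ∧ 0 < eulerPressure γ U}


/-! The Lax–Friedrichs state is the midpoint of the two one-sided states `U_L + F(U_L)/λ` and
`U_R − F(U_R)/λ`. The invariant domain is convex, so it suffices that each of them lies in it,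
i.e. that an explicit Euler step `U + t F(U)` stays in the domain under the CFL condition
`|t| (|v| + c) ≤ 1`. Writing `v = m/ρ`, that step satisfies
`2ρ'E' − m'² = (2ρE − m²)(1 + tv)² − t²p²` with `(γ−1)(2ρE − m²) = 2ρp`, and the CFL condition
gives `ρ(1 + tv)² ≥ ρ t²c² = γ t²p`, which makes the right-hand side positive. -/

section EulerInvariantDomain

variable {γ : ℝ}

theorem two_mul_density_mul_eulerPressure (U : ℝ × ℝ × ℝ) (hρ : U.1 ≠ 0) :
    2 * U.1 * eulerPressure γ U = (γ - 1) * (2 * U.1 * U.2.2 - U.2.1 ^ 2) := by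
  unfold eulerPressure
  field_simp

theorem mem_eulerInvariantDomain_iff (hγ : 1 < γ) (U : ℝ × ℝ × ℝ) :
    U ∈ eulerInvariantDomain γ ↔ 0 < U.1 ∧ U.2.1 ^ 2 < 2 * U.1 * U.2.2 := by
  refine and_congr_right fun hρ => ?_
  rw [← mul_pos_iff_of_pos_left (by positivity : 0 < 2 * U.1),
    two_mul_density_mul_eulerPressure U hρ.ne', mul_pos_iff_of_pos_left (by linarith), sub_pos]

theorem mul_lt_mul_add_mul_of_sq_lt {ρ₁ ρ₂ m₁ m₂ E₁ E₂ : ℝ} (hρ₁ : 0 < ρ₁) (hρ₂ : 0 < ρ₂)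
    (h₁ : m₁ ^ 2 < 2 * ρ₁ * E₁) (h₂ : m₂ ^ 2 < 2 * ρ₂ * E₂) :
    m₁ * m₂ < ρ₁ * E₂ + ρ₂ * E₁ := by
  have h : 2 * ρ₁ * ρ₂ * (m₁ * m₂) < 2 * ρ₁ * ρ₂ * (ρ₁ * E₂ + ρ₂ * E₁) := by
    nlinarith [sq_nonneg (ρ₁ * m₂ - ρ₂ * m₁), mul_lt_mul_of_pos_left h₂ (pow_pos hρ₁ 2),
      mul_lt_mul_of_pos_left h₁ (pow_pos hρ₂ 2)]
  exact lt_of_mul_lt_mul_left h (by positivity)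

theorem convex_eulerInvariantDomain (hγ : 1 < γ) : Convex ℝ (eulerInvariantDomain γ) := by
  refine convex_iff_forall_pos.2 ?_
  rintro ⟨ρ₁, m₁, E₁⟩ hU₁ ⟨ρ₂, m₂, E₂⟩ hU₂ a b ha hb -
  rw [mem_eulerInvariantDomain_iff hγ] at hU₁ hU₂ ⊢
  obtain ⟨hρ₁, h₁⟩ := hU₁
  obtain ⟨hρ₂, h₂⟩ := hU₂
  dsimp only at hρ₁ hρ₂ h₁ h₂
  simp only [Prod.smul_mk, Prod.mk_add_mk, smul_eq_mul]
  have hcross := mul_lt_mul_add_mul_of_sq_lt hρ₁ hρ₂ h₁ h₂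
  refine ⟨by positivity, ?_⟩
  nlinarith [mul_pos (pow_pos ha 2) (sub_pos.2 h₁), mul_pos (pow_pos hb 2) (sub_pos.2 h₂),
    mul_pos (mul_pos ha hb) (sub_pos.2 hcross)]

theorem eulerSoundSpeed_pos (hγ : 1 < γ) {U : ℝ × ℝ × ℝ} (hU : U ∈ eulerInvariantDomain γ) :
    0 < eulerSoundSpeed γ U := by
  obtain ⟨hρ, hp⟩ := hU
  exact Real.sqrt_pos.2 (div_pos (mul_pos (by linarith) hp) hρ)

theorem explicit_step_energy_identity (ρ m E p t : ℝ) (hρ : ρ ≠ 0) :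
    2 * (ρ + t * m) * (E + t * (m / ρ * (E + p))) - (m + t * (m ^ 2 / ρ + p)) ^ 2
      = (2 * ρ * E - m ^ 2) * (1 + t * (m / ρ)) ^ 2 - t ^ 2 * p ^ 2 := by
  field_simp
  ring

theorem add_smul_eulerFlux_mem (hγ : 1 < γ) {U : ℝ × ℝ × ℝ} (hU : U ∈ eulerInvariantDomain γ)
    {t : ℝ} (ht : |t| * (|U.2.1 / U.1| + eulerSoundSpeed γ U) ≤ 1) :
    U + t • eulerFlux γ U ∈ eulerInvariantDomain γ := by
  rcases eq_or_ne t 0 with rfl | ht₀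
  · simpa using hU
  have hc := eulerSoundSpeed_pos hγ hU
  obtain ⟨ρ, m, E⟩ := U
  obtain ⟨hρ, hp⟩ := hU
  simp only [eulerFlux, Prod.smul_mk, Prod.mk_add_mk, smul_eq_mul] at hρ ht hc hp ⊢
  set p := eulerPressure γ (ρ, m, E)
  set c := eulerSoundSpeed γ (ρ, m, E)
  have hc₂ : c ^ 2 = γ * p / ρ := Real.sq_sqrt (div_nonneg (mul_nonneg (by linarith) hp.le) hρ.le)
  have htc : 0 < |t| * c := mul_pos (abs_pos.2 ht₀) hc
  have hstep : |t| * c ≤ 1 + t * (m / ρ) := by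
    have := neg_abs_le (t * (m / ρ))
    rw [abs_mul] at this
    linarith
  have hsq : γ * (t ^ 2 * p) ≤ ρ * (1 + t * (m / ρ)) ^ 2 := by
    have h := pow_le_pow_left₀ htc.le hstep 2
    rw [mul_pow, sq_abs, hc₂, mul_div_assoc', div_le_iff₀ hρ] at h
    linarith
  have hp' : 0 < p ^ 2 * t ^ 2 := by positivity
  rw [mem_eulerInvariantDomain_iff hγ]
  refine ⟨?_, ?_⟩
  · have : ρ + t * m = ρ * (1 + t * (m / ρ)) := by field_simp
    rw [this]
    exact mul_pos hρ (htc.trans_le hstep)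
  · rw [← sub_pos, explicit_step_energy_identity ρ m E p t hρ.ne']
    have hrel := two_mul_density_mul_eulerPressure (γ := γ) (ρ, m, E) hρ.ne'
    dsimp only at hrel
    have hscaled : (γ - 1) * ((2 * ρ * E - m ^ 2) * (1 + t * (m / ρ)) ^ 2 - t ^ 2 * p ^ 2)
        = 2 * p * (ρ * (1 + t * (m / ρ)) ^ 2) - (γ - 1) * (p ^ 2 * t ^ 2) := by
      linear_combination -(1 + t * (m / ρ)) ^ 2 * hrel
    refine pos_of_mul_pos_right (a := γ - 1) ?_ (by linarith)
    rw [hscaled]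
    nlinarith [mul_le_mul_of_nonneg_left hsq (by positivity : (0 : ℝ) ≤ 2 * p)]

end EulerInvariantDomain

/-- **Generalized Lax–Friedrichs splitting property for the 1D compressible Euler
equations.** If `U_L, U_R` have positive density and pressure and
`λ ≥ max{|v_L| + c_L, |v_R| + c_R}`, then
`(U_L + U_R)/2 − (F(U_R) − F(U_L))/(2λ)` has positive density and pressure. -/
theorem euler_lax_friedrichs_splitting
    (γ : ℝ) (hγ : 1 < γ) (UL UR : ℝ × ℝ × ℝ)
    (hUL : UL ∈ eulerInvariantDomain γ) (hUR : UR ∈ eulerInvariantDomain γ)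
    (lam : ℝ)
    (hlam : lam ≥ max (|UL.2.1 / UL.1| + eulerSoundSpeed γ UL)
      (|UR.2.1 / UR.1| + eulerSoundSpeed γ UR)) :
    (1 / 2 : ℝ) • (UL + UR) - (1 / (2 * lam)) • (eulerFlux γ UR - eulerFlux γ UL) ∈
      eulerInvariantDomain γ := by
  have hL := (le_max_left _ _).trans hlam
  have hR := (le_max_right _ _).trans hlam
  have hlam₀ : 0 < lam :=
    (add_pos_of_nonneg_of_pos (abs_nonneg _) (eulerSoundSpeed_pos hγ hUL)).trans_le hL
  have cfl : ∀ {s a : ℝ}, |s| = 1 → a ≤ lam → |s / lam| * a ≤ 1 := fun hs ha => by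
    rw [abs_div, hs, abs_of_pos hlam₀, one_div_mul_eq_div, div_le_one hlam₀]
    exact ha
  have hWL := add_smul_eulerFlux_mem hγ hUL (cfl abs_one hL)
  have hWR := add_smul_eulerFlux_mem hγ hUR (cfl (by norm_num : |(-1 : ℝ)| = 1) hR)
  convert convex_eulerInvariantDomain hγ hWL hWR (by norm_num : (0 : ℝ) ≤ 1 / 2)
    (by norm_num : (0 : ℝ) ≤ 1 / 2) (by norm_num) using 1
  module
end

section
/- Let U_min < U_max and suppose ū ∈ [U_min, U_max], u_L, u_M, u_R ∈ ℝ satisfy the cell average decomposition ū = (1/6)u_L + (4/6)u_M + (1/6)u_R, with u_L, u_R ∈ [U_min, U_max]. Define θ = (ū − U_min)/(ū − u_M) if u_M < U_min, θ = (U_max − ū)/(u_M − ū) if u_M > U_max, and θ = 1 otherwise; and set û_L = (1−θ)ū + θ u_L, û_M = (1−θ)ū + θ u_M, û_R = (1−θ)ū + θ u_R. Then û_L, û_M, û_R ∈ [U_min, U_max] and ū = (1/6)û_L + (4/6)û_M + (1/6)û_R. -/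
/-- **Local scaling IDP limiter for scalar conservation laws.** Given a cell
average `ū ∈ [U_min, U_max]` with cell average decomposition
`ū = (1/6)u_L + (4/6)u_M + (1/6)u_R` and endpoint values `u_L, u_R ∈ [U_min, U_max]`,
the limited values `û = (1−θ)ū + θu` (with the scaling factor `θ` defined from the
midpoint value) lie in `[U_min, U_max]` and still satisfy the cell average
decomposition. -/
theorem scalar_idp_limiter
    (Umin Umax : ℝ) (h : Umin < Umax)
    (ubar uL uM uR : ℝ)
    (hubar : ubar ∈ Set.Icc Umin Umax)
    (hCAD : ubar = (1 / 6) * uL + (4 / 6) * uM + (1 / 6) * uR)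
    (huL : uL ∈ Set.Icc Umin Umax) (huR : uR ∈ Set.Icc Umin Umax)
    (θ uhatL uhatM uhatR : ℝ)
    (hθ : θ = if uM < Umin then (ubar - Umin) / (ubar - uM)
          else if Umax < uM then (Umax - ubar) / (uM - ubar)
          else 1)
    (hL : uhatL = (1 - θ) * ubar + θ * uL)
    (hM : uhatM = (1 - θ) * ubar + θ * uM)
    (hR : uhatR = (1 - θ) * ubar + θ * uR) :
    uhatL ∈ Set.Icc Umin Umax ∧ uhatM ∈ Set.Icc Umin Umax ∧
    uhatR ∈ Set.Icc Umin Umax ∧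
    ubar = (1 / 6) * uhatL + (4 / 6) * uhatM + (1 / 6) * uhatR := by

  obtain ⟨hu1, hu2⟩ := hubar
  obtain ⟨hL1, hL2⟩ := huL
  obtain ⟨hR1, hR2⟩ := huR
  have key : (0 ≤ θ ∧ θ ≤ 1) ∧ uhatM ∈ Set.Icc Umin Umax := by
    by_cases hc : uM < Umin
    · have hpos : 0 < ubar - uM := by linarith
      have hθ' : θ = (ubar - Umin) / (ubar - uM) := by rw [hθ, if_pos hc]
      have h0 : 0 ≤ θ := by rw [hθ']; exact div_nonneg (by linarith) hpos.le
      have h1 : θ ≤ 1 := by rw [hθ', div_le_one hpos]; linarith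
      have hMval : uhatM = Umin := by
        rw [hM, hθ']; field_simp; ring
      exact ⟨⟨h0, h1⟩, by rw [hMval]; exact ⟨le_refl _, h.le⟩⟩
    · by_cases hc2 : Umax < uM
      · have hpos : 0 < uM - ubar := by linarith
        have hθ' : θ = (Umax - ubar) / (uM - ubar) := by
          rw [hθ, if_neg hc, if_pos hc2]
        have h0 : 0 ≤ θ := by rw [hθ']; exact div_nonneg (by linarith) hpos.le
        have h1 : θ ≤ 1 := by rw [hθ', div_le_one hpos]; linarith
        have hMval : uhatM = Umax := by
          rw [hM, hθ']; field_simp; ring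
        exact ⟨⟨h0, h1⟩, by rw [hMval]; exact ⟨h.le, le_refl _⟩⟩
      · have hθ' : θ = 1 := by rw [hθ, if_neg hc, if_neg hc2]
        have hMval : uhatM = uM := by rw [hM, hθ']; ring
        exact ⟨⟨by norm_num [hθ'], by norm_num [hθ']⟩,
          by rw [hMval]; exact ⟨not_lt.mp hc, not_lt.mp hc2⟩⟩
  obtain ⟨⟨h0, h1⟩, hMmem⟩ := key
  refine ⟨⟨?_, ?_⟩, hMmem, ⟨?_, ?_⟩, ?_⟩
  · rw [hL]; nlinarith
  · rw [hL]; nlinarith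
  · rw [hR]; nlinarith
  · rw [hR]; nlinarith
  · subst hCAD hL hM hR; ring
end

section
/- Let γ > 1, and let ρ(U), p(U) = (γ−1)(E − m²/(2ρ)) denote the density and pressure of a state U = (ρ, m, E) ∈ ℝ³. Let ε_ρ > 0, ε_p > 0, and suppose the cell average Ū satisfies ρ(Ū) ≥ ε_ρ and p(Ū) ≥ ε_p, the endpoint values U_L, U_R satisfy ρ > 0 and p > 0, and the cell average decomposition Ū = (1/6)U_L + (4/6)U_M + (1/6)U_R holds. Define θ_ρ = (ρ(Ū) − ε_ρ)/(ρ(Ū) − ρ(U_M)) if ρ(U_M) < ε_ρ and θ_ρ = 1 otherwise; set U* = (1−θ_ρ)Ū + θ_ρ U_M; define θ_p = (p(Ū) − ε_p)/(p(Ū) − p(U*)) if p(U*) < ε_p and θ_p = 1 otherwise; set θ = θ_ρ θ_p, Û_M = (1−θ_p)Ū + θ_p U*, Û_L = (1−θ)Ū + θ U_L, Û_R = (1−θ)Ū + θ U_R. Then: (i) ρ(Û_M) ≥ ε_ρ and p(Û_M) ≥ ε_p; (ii) ρ(Û_L), ρ(Û_R) > 0 and p(Û_L), p(Û_R) > 0;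 and (iii) the cell average decomposition is preserved: Ū = (1/6)Û_L + (4/6)Û_M + (1/6)Û_R. -/
private lemma convex_pos {a b t : ℝ} (ha : 0 < a) (hb : 0 < b)
    (ht0 : 0 ≤ t) (ht1 : t ≤ 1) : 0 < (1 - t) * a + t * b := by
  rcases lt_or_ge t 1 with h | h
  · nlinarith [mul_pos (show (0:ℝ) < 1 - t by linarith) ha, mul_nonneg ht0 hb.le]
  · have : t = 1 := le_antisymm ht1 h
    subst this; nlinarith

private lemma convex_ge {a b c t : ℝ} (ha : c ≤ a) (hb : c ≤ b)
    (ht0 : 0 ≤ t) (ht1 : t ≤ 1) : c ≤ (1 - t) * a + t * b := by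
  nlinarith [mul_nonneg (show (0:ℝ) ≤ 1 - t by linarith) (show (0:ℝ) ≤ a - c by linarith),
    mul_nonneg ht0 (show (0:ℝ) ≤ b - c by linarith)]

/-- Concavity of the pressure on states with positive density: the pressure of a
convex combination dominates the convex combination of pressures. -/
private lemma eulerPressure_concave (γ : ℝ) (hγ : 1 < γ) (A B : ℝ × ℝ × ℝ)
    (hA : 0 < A.1) (hB : 0 < B.1) {t : ℝ} (ht0 : 0 ≤ t) (ht1 : t ≤ 1) :
    (1 - t) * eulerPressure γ A + t * eulerPressure γ B ≤
      eulerPressure γ ((1 - t) • A + t • B) := by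
  obtain ⟨ρA, mA, EA⟩ := A
  obtain ⟨ρB, mB, EB⟩ := B
  simp only [Prod.fst] at hA hB
  have hρc : 0 < (1 - t) * ρA + t * ρB := convex_pos hA hB ht0 ht1
  simp only [eulerPressure, Prod.smul_mk, Prod.mk_add_mk, smul_eq_mul]
  have hm : ((1-t)*mA + t*mB)^2 / (2*((1-t)*ρA + t*ρB)) ≤
      (1-t)*(mA^2/(2*ρA)) + t*(mB^2/(2*ρB)) := by
    rw [div_le_iff₀ (by positivity)]
    have e : (1-t)*(mA^2/(2*ρA)) + t*(mB^2/(2*ρB)) =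
        ((1-t)*(mA^2*ρB) + t*(mB^2*ρA)) / (2*(ρA*ρB)) := by
      field_simp
    rw [e, div_mul_eq_mul_div, le_div_iff₀ (by positivity)]
    nlinarith [mul_nonneg (mul_nonneg ht0 (show (0:ℝ) ≤ 1 - t by linarith))
      (sq_nonneg (mA*ρB - mB*ρA))]
  nlinarith [mul_le_mul_of_nonneg_left hm (show (0:ℝ) ≤ γ - 1 by linarith)]

/-- **Local scaling IDP limiter for the 1D compressible Euler equations.**
First the density limiter (factor `θ_ρ`) enforces `ρ ≥ ε_ρ` at the midpoint, then
the pressure limiter (factor `θ_p`) enforces `p ≥ ε_p`; the endpoint values are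
blended with the combined factor `θ = θ_ρθ_p`. The limited midpoint value satisfies
`ρ ≥ ε_ρ` and `p ≥ ε_p`, the limited endpoint values have positive density and
pressure, and the cell average decomposition is preserved. -/
theorem euler_idp_limiter
    (γ : ℝ) (hγ : 1 < γ) (ερ εp : ℝ) (hερ : 0 < ερ) (hεp : 0 < εp)
    (Ubar UL UM UR : ℝ × ℝ × ℝ)
    (hρbar : ερ ≤ Ubar.1) (hpbar : εp ≤ eulerPressure γ Ubar)
    (hρL : 0 < UL.1) (hpL : 0 < eulerPressure γ UL)
    (hρR : 0 < UR.1) (hpR : 0 < eulerPressure γ UR)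
    (hCAD : Ubar = (1 / 6 : ℝ) • UL + (4 / 6 : ℝ) • UM + (1 / 6 : ℝ) • UR)
    (θρ θp θ : ℝ) (Ustar UhatM UhatL UhatR : ℝ × ℝ × ℝ)
    (hθρ : θρ = if UM.1 < ερ then (Ubar.1 - ερ) / (Ubar.1 - UM.1) else 1)
    (hUstar : Ustar = (1 - θρ) • Ubar + θρ • UM)
    (hθp : θp = if eulerPressure γ Ustar < εp then
        (eulerPressure γ Ubar - εp) / (eulerPressure γ Ubar - eulerPressure γ Ustar)
      else 1)
    (hθ : θ = θρ * θp)
    (hM : UhatM = (1 - θp) • Ubar + θp • Ustar)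
    (hL : UhatL = (1 - θ) • Ubar + θ • UL)
    (hR : UhatR = (1 - θ) • Ubar + θ • UR) :
    (ερ ≤ UhatM.1 ∧ εp ≤ eulerPressure γ UhatM) ∧
    (0 < UhatL.1 ∧ 0 < UhatR.1 ∧
      0 < eulerPressure γ UhatL ∧ 0 < eulerPressure γ UhatR) ∧
    Ubar = (1 / 6 : ℝ) • UhatL + (4 / 6 : ℝ) • UhatM + (1 / 6 : ℝ) • UhatR := by
  have hρbar0 : 0 < Ubar.1 := lt_of_lt_of_le hερ hρbar
  have hpbar0 : 0 < eulerPressure γ Ubar := lt_of_lt_of_le hεp hpbar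
  -- θρ bounds
  have hθρ0 : 0 ≤ θρ := by
    rw [hθρ]; split_ifs with h
    · exact div_nonneg (by linarith) (by linarith)
    · exact zero_le_one
  have hθρ1 : θρ ≤ 1 := by
    rw [hθρ]; split_ifs with h
    · rw [div_le_one (by linarith)]; linarith
    · exact le_refl 1
  -- density of Ustar
  have hρstar : ερ ≤ Ustar.1 := by
    rw [hUstar]
    simp only [Prod.fst_add, Prod.smul_fst, smul_eq_mul]
    rw [hθρ]; split_ifs with h
    · have hd : (0:ℝ) < Ubar.1 - UM.1 := by linarith
      have heq : (1 - (Ubar.1 - ερ) / (Ubar.1 - UM.1)) * Ubar.1 +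
          (Ubar.1 - ερ) / (Ubar.1 - UM.1) * UM.1 = ερ := by
        field_simp
        ring
      exact heq.ge
    · nlinarith [not_lt.mp h]
  have hρstar0 : 0 < Ustar.1 := lt_of_lt_of_le hερ hρstar
  -- θp bounds
  have hθp0 : 0 ≤ θp := by
    rw [hθp]; split_ifs with h
    · exact div_nonneg (by linarith) (by linarith)
    · exact zero_le_one
  have hθp1 : θp ≤ 1 := by
    rw [hθp]; split_ifs with h
    · rw [div_le_one (by linarith)]; linarith
    · exact le_refl 1
  -- pressure lower bound for the combination
  have hplow : εp ≤ (1 - θp) * eulerPressure γ Ubar + θp * eulerPressure γ Ustar := by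
    rw [hθp]; split_ifs with h
    · have hd : (0:ℝ) < eulerPressure γ Ubar - eulerPressure γ Ustar := by linarith
      have heq : (1 - (eulerPressure γ Ubar - εp) /
            (eulerPressure γ Ubar - eulerPressure γ Ustar)) * eulerPressure γ Ubar +
          (eulerPressure γ Ubar - εp) /
            (eulerPressure γ Ubar - eulerPressure γ Ustar) * eulerPressure γ Ustar = εp := by
        field_simp
        ring
      exact heq.ge
    · nlinarith [not_lt.mp h]
  have hpM : εp ≤ eulerPressure γ UhatM := by
    rw [hM]
    exact hplow.trans (eulerPressure_concave γ hγ Ubar Ustar hρbar0 hρstar0 hθp0 hθp1)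
  have hρM : ερ ≤ UhatM.1 := by
    rw [hM]
    simp only [Prod.fst_add, Prod.smul_fst, smul_eq_mul]
    exact convex_ge hρbar hρstar hθp0 hθp1
  -- θ bounds
  have hθ0 : 0 ≤ θ := by rw [hθ]; exact mul_nonneg hθρ0 hθp0
  have hθ1 : θ ≤ 1 := by rw [hθ]; nlinarith
  -- endpoints
  have hρLhat : 0 < UhatL.1 := by
    rw [hL]; simp only [Prod.fst_add, Prod.smul_fst, smul_eq_mul]
    exact convex_pos hρbar0 hρL hθ0 hθ1
  have hρRhat : 0 < UhatR.1 := by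
    rw [hR]; simp only [Prod.fst_add, Prod.smul_fst, smul_eq_mul]
    exact convex_pos hρbar0 hρR hθ0 hθ1
  have hpLhat : 0 < eulerPressure γ UhatL := by
    rw [hL]
    exact lt_of_lt_of_le (convex_pos hpbar0 hpL hθ0 hθ1)
      (eulerPressure_concave γ hγ Ubar UL hρbar0 hρL hθ0 hθ1)
  have hpRhat : 0 < eulerPressure γ UhatR := by
    rw [hR]
    exact lt_of_lt_of_le (convex_pos hpbar0 hpR hθ0 hθ1)
      (eulerPressure_concave γ hγ Ubar UR hρbar0 hρR hθ0 hθ1)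
  refine ⟨⟨hρM, hpM⟩, ⟨hρLhat, hρRhat, hpLhat, hpRhat⟩, ?_⟩
  rw [hL, hM, hR, hUstar, hθ]
  rw [hCAD]
  module
end

section
/- Let U_min < U_max, let f : ℝ → ℝ be differentiable with |f′(u)| ≤ α for all u ∈ [U_min, U_max], where α > 0, and define the local Lax–Friedrichs numerical flux f̂(a, b) = (f(a) + f(b))/2 − (α/2)(b − a). Then for all u₁, u₂, u₃ ∈ [U_min, U_max] and all μ ≥ 0 with μ·α ≤ 1, one has u₂ − μ·(f̂(u₂, u₃) − f̂(u₁, u₂)) ∈ [U_min, U_max]. -/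
/-- **IDP property of the local Lax–Friedrichs flux for scalar conservation laws.**
If `|f′| ≤ α` on `[U_min, U_max]` and `f̂(a,b) = (f(a)+f(b))/2 − (α/2)(b−a)` is the
local Lax–Friedrichs flux, then the three-point first-order scheme
`u₂ − μ(f̂(u₂,u₃) − f̂(u₁,u₂))` maps `[U_min, U_max]`-valued data into
`[U_min, U_max]` under the CFL condition `μα ≤ 1`. -/
theorem scalar_llf_flux_idp
    (Umin Umax : ℝ) (h : Umin < Umax)
    (f : ℝ → ℝ) (hf : Differentiable ℝ f)
    (α : ℝ) (hα : 0 < α)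
    (hbound : ∀ u ∈ Set.Icc Umin Umax, |deriv f u| ≤ α)
    (fhat : ℝ → ℝ → ℝ)
    (hfhat : ∀ a b : ℝ, fhat a b = (f a + f b) / 2 - (α / 2) * (b - a))
    (u₁ u₂ u₃ : ℝ)
    (h₁ : u₁ ∈ Set.Icc Umin Umax) (h₂ : u₂ ∈ Set.Icc Umin Umax)
    (h₃ : u₃ ∈ Set.Icc Umin Umax)
    (μ : ℝ) (hμ : 0 ≤ μ) (hCFL : μ * α ≤ 1) :
    u₂ - μ * (fhat u₂ u₃ - fhat u₁ u₂) ∈ Set.Icc Umin Umax := by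
  -- the two "monotone flux" functions
  have hg1 : MonotoneOn (fun v => α * v - f v) (Set.Icc Umin Umax) := by
    apply monotoneOn_of_deriv_nonneg (convex_Icc _ _)
    · exact ((continuous_const.mul continuous_id).sub hf.continuous).continuousOn
    · exact fun x _ => (((differentiable_id.const_mul α).sub hf) x).differentiableWithinAt
    · intro x hx
      have hd : HasDerivAt (fun v => α * v - f v) (α * 1 - deriv f x) x :=
        ((hasDerivAt_id x).const_mul α).sub (hf x).hasDerivAt
      rw [hd.deriv]
      linarith [(abs_le.mp (hbound x (interior_subset hx))).2]
  have hg2 : MonotoneOn (fun v => α * v + f v) (Set.Icc Umin Umax) := by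
    apply monotoneOn_of_deriv_nonneg (convex_Icc _ _)
    · exact ((continuous_const.mul continuous_id).add hf.continuous).continuousOn
    · exact fun x _ => (((differentiable_id.const_mul α).add hf) x).differentiableWithinAt
    · intro x hx
      have hd : HasDerivAt (fun v => α * v + f v) (α * 1 + deriv f x) x :=
        ((hasDerivAt_id x).const_mul α).add (hf x).hasDerivAt
      rw [hd.deriv]
      linarith [(abs_le.mp (hbound x (interior_subset hx))).1]
  have hMM : (Umax : ℝ) ∈ Set.Icc Umin Umax := ⟨le_of_lt h, le_refl _⟩
  have hmm : (Umin : ℝ) ∈ Set.Icc Umin Umax := ⟨le_refl _, le_of_lt h⟩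
  have b1u : α * u₃ - f u₃ ≤ α * Umax - f Umax := hg1 h₃ hMM h₃.2
  have b1l : α * Umin - f Umin ≤ α * u₃ - f u₃ := hg1 hmm h₃ h₃.1
  have b2u : α * u₁ + f u₁ ≤ α * Umax + f Umax := hg2 h₁ hMM h₁.2
  have b2l : α * Umin + f Umin ≤ α * u₁ + f u₁ := hg2 hmm h₁ h₁.1
  have hμα : 0 ≤ 1 - μ * α := by linarith
  rw [hfhat, hfhat]
  constructor
  · nlinarith [mul_nonneg hμ (sub_nonneg.mpr b1l), mul_nonneg hμ (sub_nonneg.mpr b2l),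
      mul_nonneg hμα (sub_nonneg.mpr h₂.1)]
  · nlinarith [mul_nonneg hμ (sub_nonneg.mpr b1u), mul_nonneg hμ (sub_nonneg.mpr b2u),
      mul_nonneg hμα (sub_nonneg.mpr h₂.2)]
end
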